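/- Fix n ∈ ℕ, a tetra-closed set G of triples of Fin n, and thresholds t, s ∈ ℕ with n > 3 + 3t and 3s + 1 ≤ t. Let x, y, v be three distinct s-good vertices such that the edges {v,x} and {v,y} are t-good and {v,x,y} ∈ G. Then the edge {x,y} is t-good. -/

import Mathlib

/-- A set `G` of triples of `Fin n` is tetra-closed if for every 4-element
subset `s` of `Fin n`, whenever three of the four 3-element subsets of `s`
belong to `G`, so does the fourth. -/
def TetraClosed {n : ℕ} (G : Finset (Finset (Fin n))) : Prop :=
  ∀ s : Finset (Fin n), s.card = 4 →
    ∀ f ∈ s.powersetCard 3, (∀ g ∈ s.powersetCard 3, g ≠ f → g ∈ G) → f ∈ G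

/-- The bad triples (triples of `Fin n` not in `G`) containing the edge `e`. -/
def badTriplesOn {n : ℕ} (G : Finset (Finset (Fin n))) (e : Finset (Fin n)) :
    Finset (Finset (Fin n)) :=
  ((Finset.univ : Finset (Fin n)).powersetCard 3).filter (fun f => e ⊆ f ∧ f ∉ G)

/-- The `t`-bad edges: the 2-element subsets of `Fin n` contained in more than
`t` bad triples. -/
def tBadEdges {n : ℕ} (G : Finset (Finset (Fin n))) (t : ℕ) :
    Finset (Finset (Fin n)) :=
  ((Finset.univ : Finset (Fin n)).powersetCard 2).filter
    (fun e => t < (badTriplesOn G e).card)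

/-- The number of `t`-bad edges containing the vertex `v`. -/
def badEdgeDegree {n : ℕ} (G : Finset (Finset (Fin n))) (t : ℕ) (v : Fin n) : ℕ :=
  ((tBadEdges G t).filter (fun e => v ∈ e)).card

/-!
A triangle whose three sides are `t`-good lies in `G` once `n > 3 + 3t`: at most `3t` vertices
make a bad triple with one of its sides, so some fourth vertex `z` makes all three triples
through `z` good, and tetra-closedness on the triangle plus `z` gives the fourth one.

If `{x, y}` were `t`-bad, more than `3s + 1` vertices `z` would make `{x, y, z}` bad. Yet every
`z ≠ v` that is joined to none of `x`, `y`, `v` by a `t`-bad edge (all but at most `3s` of them)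
puts `{v, x, z}` and `{v, y, z}` in `G` by the triangle lemma, and then tetra-closedness on
`{v, x, y, z}` puts `{x, y, z}` in `G`.
-/

open Finset

lemma TetraClosed.erase_mem {n : ℕ} {G : Finset (Finset (Fin n))} (hG : TetraClosed G)
    {s : Finset (Fin n)} (hs : s.card = 4) {w : Fin n} (hw : w ∈ s)
    (h : ∀ u ∈ s, u ≠ w → s.erase u ∈ G) : s.erase w ∈ G := by
  refine hG s hs _ (mem_powersetCard.2 ⟨erase_subset w s, by rw [card_erase_of_mem hw, hs]⟩) ?_
  intro g hg hgw
  obtain ⟨hgs, hg3⟩ := mem_powersetCard.1 hg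
  obtain ⟨u, hug, hsu⟩ := exists_eq_insert_iff.2 ⟨hgs, by rw [hg3, hs]⟩
  have hgu : g = s.erase u := by rw [← hsu, erase_insert hug]
  rw [hgu] at hgw ⊢
  exact h u (hsu ▸ mem_insert_self u g) (fun huw => hgw (huw ▸ rfl))

lemma TetraClosed.mem_of_mem_of_mem_of_mem {n : ℕ} {G : Finset (Finset (Fin n))}
    (hG : TetraClosed G) {a b c d : Fin n} (hab : a ≠ b) (hac : a ≠ c) (had : a ≠ d)
    (hbc : b ≠ c) (hbd : b ≠ d) (hcd : c ≠ d) (habc : {a, b, c} ∈ G)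
    (habd : {a, b, d} ∈ G) (hacd : {a, c, d} ∈ G) : {b, c, d} ∈ G := by
  have hcard : ({a, b, c, d} : Finset (Fin n)).card = 4 := by
    simp [card_insert_of_notMem, hab, hac, had, hbc, hbd, hcd]
  have := hG.erase_mem hcard (w := a) (mem_insert_self _ _) ?_
  · rwa [erase_insert (by simp [hab, hac, had])] at this
  intro u hu hua
  simp only [mem_insert, mem_singleton] at hu
  rcases hu with rfl | rfl | rfl | rfl
  · exact absurd rfl hua
  · convert hacd using 1; grind
  · convert habd using 1; grind
  · convert habc using 1; grind

def badApexes {n : ℕ} (G : Finset (Finset (Fin n))) (e : Finset (Fin n)) : Finset (Fin n) :=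
  univ.filter (fun z => z ∉ e ∧ insert z e ∉ G)

lemma card_filter_superset_card_succ {α : Type*} [Fintype α] [DecidableEq α]
    (e : Finset α) (P : Finset α → Prop) [DecidablePred P] :
    ((univ.powersetCard (e.card + 1)).filter (fun f => e ⊆ f ∧ P f)).card =
      (univ.filter (fun z => z ∉ e ∧ P (insert z e))).card := by
  symm
  refine card_bij (fun z _ => insert z e) ?_ ?_ ?_
  · intro z hz
    obtain ⟨hze, hP⟩ := (mem_filter.1 hz).2
    simp [card_insert_of_notMem hze, subset_insert, hP]
  · intro z hz z' _ h
    exact (insert_inj (mem_filter.1 hz).2.1).1 h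
  · intro f hf
    obtain ⟨hf, hef, hP⟩ := mem_filter.1 hf
    obtain ⟨z, hze, rfl⟩ := exists_eq_insert_iff.2 ⟨hef, (mem_powersetCard.1 hf).2.symm⟩
    exact ⟨z, by simp [hze, hP], rfl⟩

lemma card_badTriplesOn {n : ℕ} (G : Finset (Finset (Fin n))) {e : Finset (Fin n)}
    (he : e.card = 2) : (badTriplesOn G e).card = (badApexes G e).card := by
  have := card_filter_superset_card_succ e (· ∉ G)
  rwa [he] at this

lemma insert_mem_of_notMem_badApexes {n : ℕ} {G : Finset (Finset (Fin n))}
    {e : Finset (Fin n)} {z : Fin n} (hz : z ∉ e) (hze : z ∉ badApexes G e) :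
    insert z e ∈ G := by
  simpa [badApexes, hz] using hze

lemma TetraClosed.mem_of_card_badTriplesOn_le {n t : ℕ} {G : Finset (Finset (Fin n))}
    (hG : TetraClosed G) (hn : n > 3 + 3 * t) {a b c : Fin n}
    (hab : a ≠ b) (hac : a ≠ c) (hbc : b ≠ c)
    (h₁ : (badTriplesOn G {a, b}).card ≤ t) (h₂ : (badTriplesOn G {a, c}).card ≤ t)
    (h₃ : (badTriplesOn G {b, c}).card ≤ t) : {a, b, c} ∈ G := by
  rw [card_badTriplesOn G (card_pair hab)] at h₁
  rw [card_badTriplesOn G (card_pair hac)] at h₂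
  rw [card_badTriplesOn G (card_pair hbc)] at h₃
  set A := badApexes G {a, b}
  set B := badApexes G {a, c}
  set C := badApexes G {b, c}
  have hS : (A ∪ B ∪ C ∪ {a, b, c}).card < (univ : Finset (Fin n)).card := by
    have := card_union_le (A ∪ B ∪ C) {a, b, c}
    have := card_union_le (A ∪ B) C
    have := card_union_le A B
    have := card_le_three (a := a) (b := b) (c := c)
    rw [card_univ, Fintype.card_fin]
    omega
  obtain ⟨z, -, hz⟩ := exists_mem_notMem_of_card_lt_card hS
  simp only [mem_union, mem_insert, mem_singleton, not_or] at hz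
  obtain ⟨⟨⟨hab', hac'⟩, hbc'⟩, hza, hzb, hzc⟩ := hz
  exact hG.mem_of_mem_of_mem_of_mem hza hzb hzc hab hac hbc
    (insert_mem_of_notMem_badApexes (by simp [hza, hzb]) hab')
    (insert_mem_of_notMem_badApexes (by simp [hza, hzc]) hac')
    (insert_mem_of_notMem_badApexes (by simp [hzb, hzc]) hbc')

def tBadNeighbours {n : ℕ} (G : Finset (Finset (Fin n))) (t : ℕ) (w : Fin n) :
    Finset (Fin n) :=
  univ.filter (fun z => {w, z} ∈ tBadEdges G t)

lemma ne_of_mem_tBadNeighbours {n t : ℕ} {G : Finset (Finset (Fin n))} {w z : Fin n}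
    (hz : z ∈ tBadNeighbours G t w) : w ≠ z := by
  rintro rfl
  simp [tBadNeighbours, tBadEdges] at hz

lemma card_tBadNeighbours_le {n t : ℕ} (G : Finset (Finset (Fin n))) (w : Fin n) :
    (tBadNeighbours G t w).card ≤ badEdgeDegree G t w := by
  refine card_le_card_of_injOn (fun z => {w, z}) ?_ ?_
  · intro z hz
    simp only [coe_filter, Set.mem_ofPred_eq]
    exact ⟨(mem_filter.1 hz).2, mem_insert_self w {z}⟩
  · intro z hz z' _ h
    have : z ∈ ({w, z'} : Finset (Fin n)) := by simp only at h; simp [← h]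
    simpa [(ne_of_mem_tBadNeighbours hz).symm] using this

lemma card_badTriplesOn_le_of_notMem_tBadNeighbours {n t : ℕ} {G : Finset (Finset (Fin n))}
    {w z : Fin n} (hwz : w ≠ z) (hz : z ∉ tBadNeighbours G t w) :
    (badTriplesOn G {w, z}).card ≤ t := by
  simpa [tBadNeighbours, tBadEdges, card_pair hwz] using hz

lemma TetraClosed.badApexes_subset {n t : ℕ} {G : Finset (Finset (Fin n))}
    (hG : TetraClosed G) (hn : n > 3 + 3 * t) {x y v : Fin n} (hxy : x ≠ y) (hxv : x ≠ v)
    (hyv : y ≠ v) (hvx : (badTriplesOn G {v, x}).card ≤ t)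
    (hvy : (badTriplesOn G {v, y}).card ≤ t) (hvxy : ({v, x, y} : Finset (Fin n)) ∈ G) :
    badApexes G {x, y} ⊆
      insert v (tBadNeighbours G t x ∪ tBadNeighbours G t y ∪ tBadNeighbours G t v) := by
  intro z hz
  simp only [badApexes, mem_filter, mem_insert, mem_singleton, not_or] at hz
  obtain ⟨-, ⟨hzx, hzy⟩, hzG⟩ := hz
  by_contra! hz
  simp only [mem_insert, mem_union, not_or] at hz
  obtain ⟨hzv, ⟨hNx, hNy⟩, hNv⟩ := hz
  have hxz := card_badTriplesOn_le_of_notMem_tBadNeighbours (Ne.symm hzx) hNx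
  have hyz := card_badTriplesOn_le_of_notMem_tBadNeighbours (Ne.symm hzy) hNy
  have hvz := card_badTriplesOn_le_of_notMem_tBadNeighbours (Ne.symm hzv) hNv
  have hvxz := hG.mem_of_card_badTriplesOn_le hn (Ne.symm hxv) (Ne.symm hzv) (Ne.symm hzx)
    hvx hvz hxz
  have hvyz := hG.mem_of_card_badTriplesOn_le hn (Ne.symm hyv) (Ne.symm hzv) (Ne.symm hzy)
    hvy hvz hyz
  have hxyz := hG.mem_of_mem_of_mem_of_mem (Ne.symm hxv) (Ne.symm hyv) (Ne.symm hzv) hxy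
    (Ne.symm hzx) (Ne.symm hzy) hvxy hvxz hvyz
  exact hzG (by rwa [insert_comm, pair_comm])

theorem good_edge_propagation_general (n t s : ℕ) (G : Finset (Finset (Fin n)))
    (hG : TetraClosed G)
    (hn : n > 3 + 3 * t) (hst : 3 * s + 1 ≤ t)
    (x y v : Fin n) (hxy : x ≠ y) (hxv : x ≠ v) (hyv : y ≠ v)
    (hxgood : badEdgeDegree G t x ≤ s)
    (hygood : badEdgeDegree G t y ≤ s)
    (hvgood : badEdgeDegree G t v ≤ s)
    (hvx : (badTriplesOn G {v, x}).card ≤ t)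
    (hvy : (badTriplesOn G {v, y}).card ≤ t)
    (hvxy : ({v, x, y} : Finset (Fin n)) ∈ G) :
    (badTriplesOn G {x, y}).card ≤ t :=
  calc (badTriplesOn G {x, y}).card
      _ = (badApexes G {x, y}).card := card_badTriplesOn G (card_pair hxy)
      _ ≤ _ := card_le_card (hG.badApexes_subset hn hxy hxv hyv hvx hvy hvxy)
      _ ≤ 3 * s + 1 := by
        grw [card_insert_le, card_union_le, card_union_le, card_tBadNeighbours_le,
          card_tBadNeighbours_le, card_tBadNeighbours_le]
        omega
      _ ≤ t := hst

/-- Claim 3.4(3): if `n > 3 + 3t` and `3s + 1 ≤ t`, `G` is tetra-closed,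
`x, y, v` are distinct `s`-good vertices such that the edges `{v, x}` and
`{v, y}` are `t`-good and `{v, x, y} ∈ G`, then the edge `{x, y}` is `t`-good. -/
theorem good_edge_propagation (n t s : ℕ) (G : Finset (Finset (Fin n)))
    (hGtriples : ∀ f ∈ G, f.card = 3) (hG : TetraClosed G)
    (hn : n > 3 + 3 * t) (hst : 3 * s + 1 ≤ t)
    (x y v : Fin n) (hxy : x ≠ y) (hxv : x ≠ v) (hyv : y ≠ v)
    (hxgood : badEdgeDegree G t x ≤ s)
    (hygood : badEdgeDegree G t y ≤ s)
    (hvgood : badEdgeDegree G t v ≤ s)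
    (hvx : (badTriplesOn G {v, x}).card ≤ t)
    (hvy : (badTriplesOn G {v, y}).card ≤ t)
    (hvxy : ({v, x, y} : Finset (Fin n)) ∈ G) :
    (badTriplesOn G {x, y}).card ≤ t :=
  good_edge_propagation_general n t s G hG hn hst x y v hxy hxv hyv hxgood hygood hvgood hvx hvy
    hvxy
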